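/- Let (v*, W*, λ*, t*, p*) be an optimal solution of problem P1. Then for every user k ∈ {1,…,K} and vertex m ∈ {1,…,M}, if t*_{k,m} ≠ 0 then p*_{k,m} ≠ 0. -/

import Mathlib

lemma sum_sub_two {n : ℕ} (f g : Fin n → ℝ) (a b : Fin n) (hab : a ≠ b)
    (h : ∀ j, j ≠ a → j ≠ b → f j = g j) :
    (∑ j, f j) - ∑ j, g j = (f a - g a) + (f b - g b) := by
  rw [← Finset.sum_sub_distrib]
  rw [← Finset.sum_subset (Finset.subset_univ ({a, b} : Finset (Fin n)))
    (fun x _ hx => by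
      simp only [Finset.mem_insert, Finset.mem_singleton, not_or] at hx
      rw [h x hx.1 hx.2]; ring)]
  rw [Finset.sum_pair hab]

lemma secant_exp {x y : ℝ} (hy : 0 < y) (hxy : y < x) :
    (Real.exp y - 1) / y < (Real.exp x - 1) / x := by
  have := strictConvexOn_exp.secant_strict_mono (a := 0) (x := y) (y := x)
    (Set.mem_univ _) (Set.mem_univ _) (Set.mem_univ _) hy.ne' (hy.trans hxy).ne' hxy
  simpa using this

lemma key_ineq {c s s' : ℝ} (hc : 0 < c) (hs : 0 < s) (hss : s < s') :
    s' * ((2:ℝ) ^ (c / s') - 1) < s * ((2:ℝ) ^ (c / s) - 1) := by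
  have hs' : (0:ℝ) < s' := hs.trans hss
  have hL : (0:ℝ) < Real.log 2 := Real.log_pos (by norm_num)
  have hLc : 0 < Real.log 2 * c := mul_pos hL hc
  have e1 : (2:ℝ) ^ (c / s) = Real.exp (Real.log 2 * c / s) := by
    rw [Real.rpow_def_of_pos (by norm_num), mul_div_assoc]
  have e2 : (2:ℝ) ^ (c / s') = Real.exp (Real.log 2 * c / s') := by
    rw [Real.rpow_def_of_pos (by norm_num), mul_div_assoc]
  rw [e1, e2]
  have hy : 0 < Real.log 2 * c / s' := div_pos hLc hs'
  have hxy : Real.log 2 * c / s' < Real.log 2 * c / s :=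
    div_lt_div_of_pos_left hLc hs hss
  have h2 := mul_lt_mul_of_pos_left (secant_exp hy hxy) hLc
  have es : Real.log 2 * c * ((Real.exp (Real.log 2 * c / s) - 1) / (Real.log 2 * c / s))
      = s * (Real.exp (Real.log 2 * c / s) - 1) := by field_simp
  have es' : Real.log 2 * c * ((Real.exp (Real.log 2 * c / s') - 1) / (Real.log 2 * c / s'))
      = s' * (Real.exp (Real.log 2 * c / s') - 1) := by field_simp
  rw [es, es'] at h2
  exact h2

section Main

/-- The objective of problem P1: weighted motion energy plus communication energy. -/
noncomputable def P1Objective (M K : ℕ) (D : Fin M → Fin M → ℝ) (a α₁ α₂ μ : ℝ)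
    (W : Fin M → Fin M → ℝ) (t p : Fin K → Fin M → ℝ) : ℝ :=
  μ * (α₁ / a + α₂) * (∑ m, ∑ j, D m j * W m j) +
    (2 - μ) * ∑ k, ∑ m, t k m * p k m

/-- Feasibility for problem P1. -/
def P1Feasible (M K : ℕ) (hM : 0 < M) (A : Fin K → Fin M → ℝ) (γ : Fin K → ℝ)
    (T : ℝ) (D : Fin M → Fin M → ℝ) (a J : ℝ)
    (v : Fin M → ℝ) (W : Fin M → Fin M → ℝ) (lam : Fin M → ℝ)
    (t p : Fin K → Fin M → ℝ) : Prop :=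
  v ⟨0, hM⟩ = 1 ∧
  (∀ m, v m = 0 ∨ v m = 1) ∧
  (∀ m j, W m j = 0 ∨ W m j = 1) ∧
  (∀ m, W m m = 0) ∧
  (∀ k m, 0 ≤ t k m) ∧
  (∀ k m, 0 ≤ p k m) ∧
  -- QoS constraint
  (∀ k, γ k ≤ ∑ m, t k m * Real.logb 2 (1 + v m * A k m * p k m)) ∧
  -- time-budget constraint
  ((∑ m, ∑ j, D m j * W m j) / a + (∑ k, ∑ m, t k m) ≤ T) ∧
  -- degree constraints
  (∀ m, ∑ j, W m j = v m) ∧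
  (∀ m, ∑ j, W j m = v m) ∧
  -- subtour elimination constraints
  (∀ m j : Fin M, m ≠ j → m ≠ ⟨0, hM⟩ → j ≠ ⟨0, hM⟩ →
    lam m - lam j + ((∑ l, v l) - 1) * W m j + ((∑ l, v l) - 3) * W j m ≤
      (∑ l, v l) - 2 + J * (2 - v m - v j)) ∧
  (∀ m : Fin M, m ≠ ⟨0, hM⟩ → v m ≤ lam m ∧ lam m ≤ ((∑ l, v l) - 1) * v m) ∧
  -- no-visit constraint
  (∀ k m, (1 - v m) * t k m = 0)

/-- Proposition 1 (ii): at an optimal solution of P1, nonzero time implies nonzero power. -/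
theorem stmt_0 (M K : ℕ) (hM : 2 ≤ M) (hK : 1 ≤ K)
    (A : Fin K → Fin M → ℝ) (hA : ∀ k m, 0 < A k m)
    (γ : Fin K → ℝ) (hγ : ∀ k, 0 < γ k)
    (T : ℝ) (hT : 0 < T)
    (D : Fin M → Fin M → ℝ) (hD : ∀ m j, 0 ≤ D m j)
    (a : ℝ) (ha : 0 < a)
    (α₁ α₂ : ℝ) (hα₁ : 0 ≤ α₁) (hα₂ : 0 ≤ α₂)
    (μ : ℝ) (hμ₁ : 0 < μ) (hμ₂ : μ ≤ 1)
    (J : ℝ) (hJ : 0 < J)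
    (v : Fin M → ℝ) (W : Fin M → Fin M → ℝ) (lam : Fin M → ℝ)
    (t p : Fin K → Fin M → ℝ)
    (hfeas : P1Feasible M K (by omega) A γ T D a J v W lam t p)
    (hopt : ∀ (v' : Fin M → ℝ) (W' : Fin M → Fin M → ℝ) (lam' : Fin M → ℝ)
      (t' p' : Fin K → Fin M → ℝ),
      P1Feasible M K (by omega) A γ T D a J v' W' lam' t' p' →
      P1Objective M K D a α₁ α₂ μ W t p ≤ P1Objective M K D a α₁ α₂ μ W' t' p') :
    ∀ (k : Fin K) (m : Fin M), t k m ≠ 0 → p k m ≠ 0 := by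
  intro k m htne hpm
  obtain ⟨h1, hv01, hW01, hWdiag, ht0, hp0, hQoS, hTime, hdeg1, hdeg2, hsub1, hsub2, hnov⟩ :=
    hfeas
  have htm : 0 < t k m := lt_of_le_of_ne (ht0 k m) (Ne.symm htne)
  have hvm : v m = 1 := by
    have h := hnov k m
    rcases mul_eq_zero.mp h with h' | h'
    · linarith
    · exact absurd h' htne
  -- find a vertex with a strictly positive QoS contribution for user k
  have hsum : (∑ j : Fin M, (0:ℝ)) <
      ∑ j, t k j * Real.logb 2 (1 + v j * A k j * p k j) := by
    simpa using lt_of_lt_of_le (hγ k) (hQoS k)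
  obtain ⟨m₀, -, hm₀⟩ := Finset.exists_lt_of_sum_lt hsum
  have hlogpos : 0 < Real.logb 2 (1 + v m₀ * A k m₀ * p k m₀) := by
    by_contra h
    push_neg at h
    nlinarith [ht0 k m₀]
  have ht₀ : 0 < t k m₀ := by
    by_contra h
    push_neg at h
    nlinarith
  have hv₀ : v m₀ = 1 := by
    rcases hv01 m₀ with h | h
    · rw [h] at hlogpos; norm_num at hlogpos
    · exact h
  have hp₀ : 0 < p k m₀ := by
    rcases eq_or_lt_of_le (hp0 k m₀) with h | h
    · rw [← h] at hlogpos; norm_num at hlogpos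
    · exact h
  have hm₀m : m₀ ≠ m := by
    rintro rfl
    rw [hpm] at hp₀; exact lt_irrefl 0 hp₀
  rw [hv₀, one_mul] at hlogpos
  have hA₀ : 0 < A k m₀ := hA k m₀
  -- abbreviations
  set L : ℝ := Real.logb 2 (1 + A k m₀ * p k m₀) with hLdef
  set c : ℝ := t k m₀ * L with hcdef
  set s' : ℝ := t k m₀ + t k m with hs'def
  have hc : 0 < c := mul_pos ht₀ hlogpos
  have hss : t k m₀ < s' := lt_add_of_pos_right _ htm
  have hs'pos : 0 < s' := ht₀.trans hss
  set pnew : ℝ := ((2:ℝ) ^ (c / s') - 1) / A k m₀ with hpnewdef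
  have h2ge1 : (1:ℝ) ≤ (2:ℝ) ^ (c / s') := by
    have : (2:ℝ) ^ (0:ℝ) ≤ (2:ℝ) ^ (c / s') :=
      Real.rpow_le_rpow_of_exponent_le (by norm_num) (div_pos hc hs'pos).le
    simpa using this
  have hpnew0 : 0 ≤ pnew := div_nonneg (by linarith) hA₀.le
  have hApnew : A k m₀ * pnew = (2:ℝ) ^ (c / s') - 1 := by
    rw [hpnewdef]; field_simp
  have hlognew : Real.logb 2 (1 + A k m₀ * pnew) = c / s' := by
    rw [hApnew]
    have : (1:ℝ) + ((2:ℝ) ^ (c / s') - 1) = (2:ℝ) ^ (c / s') := by ring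
    rw [this]
    exact Real.logb_rpow (by norm_num) (by norm_num)
  have hcdiv : c / t k m₀ = L := by
    rw [hcdef]; field_simp
  have h2old : (2:ℝ) ^ (c / t k m₀) = 1 + A k m₀ * p k m₀ := by
    rw [hcdiv, hLdef]
    exact Real.rpow_logb (by norm_num) (by norm_num) (by positivity)
  -- key strict energy decrease at m₀
  have hkey : s' * pnew < t k m₀ * p k m₀ := by
    have h := key_ineq hc ht₀ hss
    rw [h2old] at h
    have h' : (s' * pnew) * A k m₀ < (t k m₀ * p k m₀) * A k m₀ := by
      calc (s' * pnew) * A k m₀ = s' * (A k m₀ * pnew) := by ring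
        _ = s' * ((2:ℝ) ^ (c / s') - 1) := by rw [hApnew]
        _ < t k m₀ * (1 + A k m₀ * p k m₀ - 1) := h
        _ = (t k m₀ * p k m₀) * A k m₀ := by ring
    exact lt_of_mul_lt_mul_right h' hA₀.le
  -- the modified point
  set tn : Fin K → Fin M → ℝ := fun k' j =>
    if k' = k then (if j = m then 0 else if j = m₀ then s' else t k' j) else t k' j with htndef
  set pn : Fin K → Fin M → ℝ := fun k' j =>
    if k' = k ∧ j = m₀ then pnew else p k' j with hpndef
  have htn_m : tn k m = 0 := by simp [htndef]
  have htn_m₀ : tn k m₀ = s' := by simp [htndef, hm₀m]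
  have htn_other : ∀ j, j ≠ m → j ≠ m₀ → tn k j = t k j := by
    intro j hjm hjm₀; simp [htndef, hjm, hjm₀]
  have htn_row : ∀ k', k' ≠ k → tn k' = t k' := by
    intro k' hk'; funext j; simp [htndef, hk']
  have hpn_m₀ : pn k m₀ = pnew := by simp [hpndef]
  have hpn_other : ∀ k' j, ¬(k' = k ∧ j = m₀) → pn k' j = p k' j := by
    intro k' j h; simp [hpndef, h]
  have htn0 : ∀ k' j, 0 ≤ tn k' j := by
    intro k' j
    by_cases hk' : k' = k
    · subst hk'
      by_cases hjm : j = m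
      · subst hjm; rw [htn_m]
      · by_cases hjm₀ : j = m₀
        · subst hjm₀; rw [htn_m₀]; positivity
        · rw [htn_other j hjm hjm₀]; exact ht0 _ j
    · rw [htn_row k' hk']; exact ht0 k' j
  have hpn0 : ∀ k' j, 0 ≤ pn k' j := by
    intro k' j
    by_cases h : k' = k ∧ j = m₀
    · obtain ⟨rfl, rfl⟩ := h; rw [hpn_m₀]; exact hpnew0
    · rw [hpn_other k' j h]; exact hp0 k' j
  -- key row sums
  have hQrow : (∑ j, tn k j * Real.logb 2 (1 + v j * A k j * pn k j)) =
      ∑ j, t k j * Real.logb 2 (1 + v j * A k j * p k j) := by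
    have hd : (∑ j, tn k j * Real.logb 2 (1 + v j * A k j * pn k j)) -
        (∑ j, t k j * Real.logb 2 (1 + v j * A k j * p k j)) =
        (tn k m * Real.logb 2 (1 + v m * A k m * pn k m) -
          t k m * Real.logb 2 (1 + v m * A k m * p k m)) +
        (tn k m₀ * Real.logb 2 (1 + v m₀ * A k m₀ * pn k m₀) -
          t k m₀ * Real.logb 2 (1 + v m₀ * A k m₀ * p k m₀)) :=
      sum_sub_two _ _ m m₀ (Ne.symm hm₀m)
      (fun j hjm hjm₀ => by
        show tn k j * Real.logb 2 (1 + v j * A k j * pn k j) =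
          t k j * Real.logb 2 (1 + v j * A k j * p k j)
        rw [htn_other j hjm hjm₀, hpn_other k j (by tauto)])
    have e1 : tn k m * Real.logb 2 (1 + v m * A k m * pn k m) = 0 := by
      rw [htn_m]; ring
    have e2 : t k m * Real.logb 2 (1 + v m * A k m * p k m) = 0 := by
      rw [hpm]; norm_num
    have e3 : tn k m₀ * Real.logb 2 (1 + v m₀ * A k m₀ * pn k m₀) = c := by
      rw [htn_m₀, hpn_m₀, hv₀, one_mul, hlognew]
      field_simp
    have e4 : t k m₀ * Real.logb 2 (1 + v m₀ * A k m₀ * p k m₀) = c := by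
      rw [hv₀, one_mul, ← hLdef, hcdef]
    rw [e1, e2, e3, e4] at hd
    linarith
  have hTrow : (∑ j, tn k j) = ∑ j, t k j := by
    have hd : (∑ j, tn k j) - (∑ j, t k j) =
        (tn k m - t k m) + (tn k m₀ - t k m₀) :=
      sum_sub_two _ _ m m₀ (Ne.symm hm₀m)
      (fun j hjm hjm₀ => htn_other j hjm hjm₀)
    rw [htn_m, htn_m₀, hs'def] at hd
    linarith
  have hErow : (∑ j, tn k j * pn k j) < ∑ j, t k j * p k j := by
    have hd : (∑ j, tn k j * pn k j) - (∑ j, t k j * p k j) =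
        (tn k m * pn k m - t k m * p k m) + (tn k m₀ * pn k m₀ - t k m₀ * p k m₀) :=
      sum_sub_two _ _ m m₀ (Ne.symm hm₀m)
      (fun j hjm hjm₀ => by
        show tn k j * pn k j = t k j * p k j
        rw [htn_other j hjm hjm₀, hpn_other k j (by tauto)])
    rw [htn_m, htn_m₀, hpn_m₀, hpm] at hd
    have : (0:ℝ) * pn k m - t k m * 0 + (s' * pnew - t k m₀ * p k m₀) < 0 := by
      simp only [zero_mul, mul_zero]
      linarith
    linarith
  -- feasibility of the modified point
  have hfeas' : P1Feasible M K (by omega) A γ T D a J v W lam tn pn := by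
    refine ⟨h1, hv01, hW01, hWdiag, htn0, hpn0, ?_, ?_, hdeg1, hdeg2, hsub1, hsub2, ?_⟩
    · intro k''
      by_cases hk : k'' = k
      · subst hk; rw [hQrow]; exact hQoS k''
      · have ht' := htn_row k'' hk
        have : (∑ j, tn k'' j * Real.logb 2 (1 + v j * A k'' j * pn k'' j)) =
            ∑ j, t k'' j * Real.logb 2 (1 + v j * A k'' j * p k'' j) := by
          apply Finset.sum_congr rfl
          intro j _
          rw [ht', hpn_other k'' j (by tauto)]
        rw [this]; exact hQoS k''
    · have : (∑ k', ∑ j, tn k' j) = ∑ k', ∑ j, t k' j := by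
        apply Finset.sum_congr rfl
        intro k' _
        by_cases hk : k' = k
        · subst hk; exact hTrow
        · rw [htn_row k' hk]
      rw [this]; exact hTime
    · intro k' j
      by_cases hk : k' = k
      · subst hk
        by_cases hjm : j = m
        · subst hjm; rw [htn_m]; ring
        · by_cases hjm₀ : j = m₀
          · subst hjm₀; rw [hv₀]; ring
          · rw [htn_other j hjm hjm₀]; exact hnov _ j
      · rw [htn_row k' hk]; exact hnov k' j
  -- strict objective decrease: contradiction with optimality
  have hobj := hopt v W lam tn pn hfeas'
  have hE : (∑ k', ∑ j, tn k' j * pn k' j) < ∑ k', ∑ j, t k' j * p k' j := by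
    apply Finset.sum_lt_sum
    · intro k' _
      by_cases hk : k' = k
      · subst hk; exact hErow.le
      · apply le_of_eq
        apply Finset.sum_congr rfl
        intro j _
        rw [htn_row k' hk, hpn_other k' j (by tauto)]
    · exact ⟨k, Finset.mem_univ k, hErow⟩
  have hlt : P1Objective M K D a α₁ α₂ μ W tn pn < P1Objective M K D a α₁ α₂ μ W t p := by
    unfold P1Objective
    have h2μ : 0 < 2 - μ := by linarith
    have := mul_lt_mul_of_pos_left hE h2μ
    linarith
  linarith

end Main
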